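/- arXiv:2110.02688 — 4 statements merged into one kernel-verified Lean document; each statement's English description precedes it below -/
import Mathlib

section
/- Let (X,d) be a finite metric space, let r_1 ≥ r_2 ≥ ... ≥ r_t, and suppose X is covered by sets of centers C_1,...,C_t with |C_i| ≤ k_i, where each point of X lies within distance r_i of some point of C_i for some i. Let L ⊆ X be any set with pairwise distances strictly greater than 2r_t. Then there exist sets C'_1,...,C'_{t-1} ⊆ L with |C'_i| ≤ k_i such that the balls of radius 2r_i around points of C'_i (for i = 1,...,t-1) together cover at least |L| − k_t points of L. -/
/-!
Replace every center of level `i < t` that lies within `r i` of some point of `L` by such a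
point; by the triangle inequality the new balls of radius `2 r i` still cover every point of `L`
that the old ones covered. The points of `L` left uncovered must then be covered at level `t`,
and since they are more than `2 r t` apart, no center of `C t` serves two of them.
-/

open scoped Classical

section
variable {X : Type*} [PseudoMetricSpace X]

theorem Finset.card_le_card_of_separated_of_covered {s C : Finset X} {r : ℝ}
    (hsep : ∀ u ∈ s, ∀ v ∈ s, u ≠ v → 2 * r < dist u v)
    (hcov : ∀ u ∈ s, ∃ c ∈ C, dist u c ≤ r) : s.card ≤ C.card := by
  choose! f hfC hfd using hcov
  refine Finset.card_le_card_of_injOn f hfC fun u hu v hv huv => ?_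
  by_contra hne
  have hfar := hsep u hu v hv hne
  have hnear : dist u v ≤ dist u (f u) + dist v (f v) := by
    rw [huv]; exact dist_triangle_right _ _ _
  linarith [hfd u hu, hfd v hv]

theorem Finset.exists_subset_card_le_forall_dist_le_two_mul (L C : Finset X) (r : ℝ) :
    ∃ C' ⊆ L, C'.card ≤ C.card ∧
      ∀ u ∈ L, ∀ c ∈ C, dist u c ≤ r → ∃ c' ∈ C', dist u c' ≤ 2 * r := by
  have hrep : ∀ c : X, ∃ v : X, (∃ w ∈ L, dist w c ≤ r) → v ∈ L ∧ dist v c ≤ r := fun c => by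
    by_cases h : ∃ w ∈ L, dist w c ≤ r
    · obtain ⟨w, hw, hwc⟩ := h
      exact ⟨w, fun _ => ⟨hw, hwc⟩⟩
    · exact ⟨c, fun h' => absurd h' h⟩
  choose rep hrep using hrep
  refine ⟨(C.filter fun c => ∃ w ∈ L, dist w c ≤ r).image rep, ?_,
    Finset.card_image_le.trans (Finset.card_filter_le _ _), ?_⟩
  · intro v hv
    obtain ⟨c, hc, rfl⟩ := Finset.mem_image.1 hv
    exact (hrep c (Finset.mem_filter.1 hc).2).1
  · intro u hu c hc hd
    have hnear := (hrep c ⟨u, hu, hd⟩).2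
    refine ⟨rep c, Finset.mem_image_of_mem _ (Finset.mem_filter.2 ⟨hc, u, hu, hd⟩), ?_⟩
    linarith [dist_triangle_right u (rep c) c]

end

theorem recenter_cover_all_but_kt_general
    {X : Type*} [MetricSpace X] (t : ℕ)
    (r : Fin (t + 1) → ℝ)
    (k : Fin (t + 1) → ℕ)
    (C : Fin (t + 1) → Finset X) (hCk : ∀ i, (C i).card ≤ k i)
    (hcover : ∀ x : X, ∃ i, ∃ c ∈ C i, dist x c ≤ r i)
    (L : Finset X)
    (hL : ∀ u ∈ L, ∀ v ∈ L, u ≠ v → 2 * r (Fin.last t) < dist u v) :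
    ∃ C' : Fin t → Finset X,
      (∀ i, C' i ⊆ L) ∧ (∀ i, (C' i).card ≤ k i.castSucc) ∧
      L.card - k (Fin.last t) ≤
        (L.filter (fun v => ∃ i : Fin t, ∃ c ∈ C' i,
          dist v c ≤ 2 * r i.castSucc)).card := by
  choose C' hC'L hC'card hC'cover using fun i : Fin t =>
    Finset.exists_subset_card_le_forall_dist_le_two_mul L (C i.castSucc) (r i.castSucc)
  refine ⟨C', hC'L, fun i => (hC'card i).trans (hCk _), ?_⟩
  set S := L.filter fun v => ∃ i : Fin t, ∃ c ∈ C' i, dist v c ≤ 2 * r i.castSucc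
  have hlast : ∀ u ∈ L \ S, ∃ c ∈ C (Fin.last t), dist u c ≤ r (Fin.last t) := by
    intro u hu
    obtain ⟨huL, huS⟩ := Finset.mem_sdiff.1 hu
    obtain ⟨i, c, hc, hd⟩ := hcover u
    cases i using Fin.lastCases with
    | last => exact ⟨c, hc, hd⟩
    | cast j =>
      obtain ⟨c', hc', hd'⟩ := hC'cover j u huL c hc hd
      exact absurd (Finset.mem_filter.2 ⟨huL, j, c', hc', hd'⟩) huS
  have hU : (L \ S).card ≤ k (Fin.last t) :=
    (Finset.card_le_card_of_separated_of_covered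
      (fun u hu v hv => hL u (Finset.sdiff_subset hu) v (Finset.sdiff_subset hv)) hlast).trans
      (hCk _)
  have hsplit : (L \ S).card + S.card = L.card :=
    Finset.card_sdiff_add_card_eq_card (Finset.filter_subset _ _)
  omega

theorem recenter_cover_all_but_kt
    {X : Type*} [MetricSpace X] [Fintype X] (t : ℕ)
    (r : Fin (t + 1) → ℝ) (hr0 : ∀ i, 0 ≤ r i) (hmono : Antitone r)
    (k : Fin (t + 1) → ℕ)
    (C : Fin (t + 1) → Finset X) (hCk : ∀ i, (C i).card ≤ k i)
    (hcover : ∀ x : X, ∃ i, ∃ c ∈ C i, dist x c ≤ r i)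
    (L : Finset X)
    (hL : ∀ u ∈ L, ∀ v ∈ L, u ≠ v → 2 * r (Fin.last t) < dist u v) :
    ∃ C' : Fin t → Finset X,
      (∀ i, C' i ⊆ L) ∧ (∀ i, (C' i).card ≤ k i.castSucc) ∧
      L.card - k (Fin.last t) ≤
        (L.filter (fun v => ∃ i : Fin t, ∃ c ∈ C' i,
          dist v c ≤ 2 * r i.castSucc)).card :=
  recenter_cover_all_but_kt_general t r k C hCk hcover L hL
end

section
/- Let (X,d) be a finite metric space partitioned into clusters {Child(v)}_{v∈L} with v ∈ Child(v) and Child(v) ⊆ B(v, 2r_t). Suppose there exist centers C'_i ⊆ L, |C'_i| ≤ k_i (for i = 1,...,t−1), such that balls of radius ρ_i around C'_i cover all but at most k_t points of L. Then X can be covered using at most k_i balls of radius ρ_i + 2r_t (for i = 1,...,t−1) centered at points of C'_i, together with at most k_t balls of radius 2r_t centered at the uncovered points of L. -/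
theorem lift_robust_solution_to_full_cover_general
    {X : Type*} [MetricSpace X] (n : ℕ)
    (rt : ℝ) (ρ : Fin n → ℝ)
    (L : Finset X) (Child : X → Set X)
    (hChildBall : ∀ v ∈ L, Child v ⊆ Metric.closedBall v (2 * rt))
    (hPartition : ∀ x : X, ∃! v, v ∈ L ∧ x ∈ Child v)
    (C' : Fin n → Finset X) :
    ∀ x : X,
      (∃ i, ∃ c ∈ C' i, dist x c ≤ ρ i + 2 * rt) ∨
      (∃ v ∈ L, (¬ ∃ i, ∃ c ∈ C' i, dist v c ≤ ρ i) ∧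
        dist x v ≤ 2 * rt) := by
  intro x
  obtain ⟨v, ⟨hvL, hxv⟩, -⟩ := hPartition x
  have hxv_le : dist x v ≤ 2 * rt := hChildBall v hvL hxv
  by_cases hv_covered : ∃ i, ∃ c ∈ C' i, dist v c ≤ ρ i
  · obtain ⟨i, c, hc, hvc⟩ := hv_covered
    refine Or.inl ⟨i, c, hc, ?_⟩
    calc dist x c ≤ dist x v + dist v c := dist_triangle x v c
      _ ≤ ρ i + 2 * rt := by linarith
  · exact Or.inr ⟨v, hvL, hv_covered, hxv_le⟩

theorem lift_robust_solution_to_full_cover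
    {X : Type*} [MetricSpace X] [Fintype X] (n : ℕ)
    (rt : ℝ) (hrt : 0 ≤ rt) (ρ : Fin n → ℝ) (hρ : ∀ i, 0 ≤ ρ i)
    (k : Fin n → ℕ) (kt : ℕ)
    (L : Finset X) (Child : X → Set X)
    (hChildMem : ∀ v ∈ L, v ∈ Child v)
    (hChildBall : ∀ v ∈ L, Child v ⊆ Metric.closedBall v (2 * rt))
    (hPartition : ∀ x : X, ∃! v, v ∈ L ∧ x ∈ Child v)
    (C' : Fin n → Finset X)
    (hC'L : ∀ i, C' i ⊆ L) (hC'k : ∀ i, (C' i).card ≤ k i)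
    (hUncov : {v ∈ (L : Set X) |
        ¬ ∃ i, ∃ c ∈ C' i, dist v c ≤ ρ i}.ncard ≤ kt) :
    ∀ x : X,
      (∃ i, ∃ c ∈ C' i, dist x c ≤ ρ i + 2 * rt) ∨
      (∃ v ∈ L, (¬ ∃ i, ∃ c ∈ C' i, dist v c ≤ ρ i) ∧
        dist x v ≤ 2 * rt) :=
  lift_robust_solution_to_full_cover_general n rt ρ L Child hChildBall hPartition C'
end

section
/- Contraction feasibility: let (X,d) be a finite metric space, L ⊆ X with pairwise distances strictly greater than 2r_2, and w : L → ℕ. Suppose there exist C_1, C_2 ⊆ X with |C_i| ≤ k_i such that ∑_{v∈L, v covered} w(v) ≥ m, where v is covered if v ∈ B(c, r_1) for some c ∈ C_1 or v ∈ B(c, r_2) for some c ∈ C_2 (with r_1 ≥ r_2). Then there exist C'_1, C'_2 ⊆ L with |C'_i| ≤ k_i such that ∑_{v∈L, v covered'} w(v) ≥ m, where v is covered' if v ∈ B(c, 2r_1) for some c ∈ C'_1 or v ∈ C'_2. -/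
/-!
Move every center of `C₁` to a point of `L` within distance `r₁` of it, if there is one: a point
of `L` that was within `r₁` of the old center is within `2 r₁` of the new one. Do the same for `C₂`
with radius `r₂`: since the balls of radius `r₂` meet `L` in at most one point (the points of `L`
are more than `2 r₂` apart), the new center is the only point of `L` the old one covered. Neither
move increases the number of centers, so the covered weight can only grow.
-/

open scoped Classical

namespace Metric

variable {X : Type*} [PseudoMetricSpace X]

theorem exists_subset_card_le_forall_dist_le (L C : Finset X) (r : ℝ) :
    ∃ C' ⊆ L, C'.card ≤ C.card ∧
      ∀ c ∈ C, ∀ v ∈ L, dist v c ≤ r → ∃ c' ∈ C', dist c' c ≤ r := by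
  choose! snap hsnap_mem hsnap_dist using fun c (h : ∃ v ∈ L, dist v c ≤ r) => h
  refine ⟨(C.filter fun c => ∃ v ∈ L, dist v c ≤ r).image snap, ?_, ?_, ?_⟩
  · simp only [Finset.image_subset_iff, Finset.mem_filter]
    exact fun c hc => hsnap_mem c hc.2
  · exact Finset.card_image_le.trans (Finset.card_filter_le _ _)
  · intro c hc v hv hvc
    exact ⟨snap c, Finset.mem_image_of_mem _ (Finset.mem_filter.2 ⟨hc, v, hv, hvc⟩),
      hsnap_dist c ⟨v, hv, hvc⟩⟩

theorem dist_le_two_mul_of_dist_le {v c c' : X} {r : ℝ} (hv : dist v c ≤ r)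
    (hc' : dist c' c ≤ r) : dist v c' ≤ 2 * r := by
  linarith [dist_triangle_right v c' c]

theorem eq_of_dist_le_of_two_mul_lt_dist {L : Set X} {r : ℝ}
    (hL : ∀ u ∈ L, ∀ v ∈ L, u ≠ v → 2 * r < dist u v) {u v c : X} (hu : u ∈ L) (hv : v ∈ L)
    (huc : dist u c ≤ r) (hvc : dist v c ≤ r) : u = v := by
  by_contra huv
  linarith [hL u hu v hv huv, dist_triangle_right u v c]

end Metric

theorem Finset.sum_ite_le_sum_ite_of_imp {ι M : Type*} [AddCommMonoid M] [PartialOrder M]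
    [CanonicallyOrderedAdd M] [IsOrderedAddMonoid M] (s : Finset ι) (f : ι → M)
    {p q : ι → Prop} [DecidablePred p] [DecidablePred q] (hpq : ∀ i ∈ s, p i → q i) :
    ∑ i ∈ s, (if p i then f i else 0) ≤ ∑ i ∈ s, if q i then f i else 0 := by
  rw [← Finset.sum_filter, ← Finset.sum_filter]
  exact Finset.sum_le_sum_of_subset (Finset.monotone_filter_right s fun i => hpq i)

theorem contraction_feasibility_general
    {X : Type*} [MetricSpace X]
    (r₁ r₂ : ℝ)
    (k₁ k₂ m : ℕ) (L : Finset X)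
    (hL : ∀ u ∈ L, ∀ v ∈ L, u ≠ v → 2 * r₂ < dist u v)
    (w : X → ℕ)
    (C₁ C₂ : Finset X) (hC₁ : C₁.card ≤ k₁) (hC₂ : C₂.card ≤ k₂)
    (hcov : (m : ℕ) ≤ ∑ v ∈ L, if (∃ c ∈ C₁, dist v c ≤ r₁) ∨
        (∃ c ∈ C₂, dist v c ≤ r₂) then w v else 0) :
    ∃ C₁' C₂' : Finset X, C₁' ⊆ L ∧ C₂' ⊆ L ∧
      C₁'.card ≤ k₁ ∧ C₂'.card ≤ k₂ ∧
      m ≤ ∑ v ∈ L, if (∃ c ∈ C₁', dist v c ≤ 2 * r₁) ∨ v ∈ C₂'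
        then w v else 0 := by
  obtain ⟨C₁', hC₁'L, hC₁'card, hC₁'near⟩ := Metric.exists_subset_card_le_forall_dist_le L C₁ r₁
  obtain ⟨C₂', hC₂'L, hC₂'card, hC₂'near⟩ := Metric.exists_subset_card_le_forall_dist_le L C₂ r₂
  refine ⟨C₁', C₂', hC₁'L, hC₂'L, hC₁'card.trans hC₁, hC₂'card.trans hC₂,
    hcov.trans (Finset.sum_ite_le_sum_ite_of_imp L w fun v hv => ?_)⟩
  rintro (⟨c, hc, hvc⟩ | ⟨c, hc, hvc⟩)
  · obtain ⟨c', hc', hc'c⟩ := hC₁'near c hc v hv hvc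
    exact Or.inl ⟨c', hc', Metric.dist_le_two_mul_of_dist_le hvc hc'c⟩
  · obtain ⟨c', hc', hc'c⟩ := hC₂'near c hc v hv hvc
    have hvc' : v = c' :=
      Metric.eq_of_dist_le_of_two_mul_lt_dist (L := (L : Set X)) hL hv (hC₂'L hc') hvc hc'c
    exact Or.inr (hvc' ▸ hc')

theorem contraction_feasibility
    {X : Type*} [MetricSpace X] [Fintype X]
    (r₁ r₂ : ℝ) (hr₂ : 0 ≤ r₂) (hr : r₂ ≤ r₁)
    (k₁ k₂ m : ℕ) (L : Finset X)
    (hL : ∀ u ∈ L, ∀ v ∈ L, u ≠ v → 2 * r₂ < dist u v)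
    (w : X → ℕ)
    (C₁ C₂ : Finset X) (hC₁ : C₁.card ≤ k₁) (hC₂ : C₂.card ≤ k₂)
    (hcov : (m : ℕ) ≤ ∑ v ∈ L, if (∃ c ∈ C₁, dist v c ≤ r₁) ∨
        (∃ c ∈ C₂, dist v c ≤ r₂) then w v else 0) :
    ∃ C₁' C₂' : Finset X, C₁' ⊆ L ∧ C₂' ⊆ L ∧
      C₁'.card ≤ k₁ ∧ C₂'.card ≤ k₂ ∧
      m ≤ ∑ v ∈ L, if (∃ c ∈ C₁', dist v c ≤ 2 * r₁) ∨ v ∈ C₂'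
        then w v else 0 :=
  contraction_feasibility_general r₁ r₂ k₁ k₂ m L hL w C₁ C₂ hC₁ hC₂ hcov
end

section
/- Two-radii re-centering with exact budget accounting: let (X,d) be a finite metric space, r_1 ≥ r_2 ≥ 0, and L ⊆ X with pairwise distances strictly greater than 2r_2. Given centers C_1, C_2 ⊆ X with |C_1| ≤ k_1, |C_2| ≤ k_2 such that every point of L lies in B(c, r_1) for some c ∈ C_1 or in B(c, r_2) for some c ∈ C_2, the set of points of L covered only via C_2 has cardinality at most k_2, and all remaining points of L can be covered by at most k_1 balls of radius 2r_1 centered at points of L. -/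
/-!
Points of a `2r₂`-separated set `L` lying within `r₂` of a centre of `C₂` determine that centre
injectively, since two of them sharing a centre would be at distance at most `2r₂`; so there are at
most `|C₂|` of them. For the rest, replace each centre `c ∈ C₁` whose ball meets `L` by one point of
`L` in that ball: the triangle inequality doubles the radius.
-/

open Finset

namespace Metric

variable {X : Type*} [PseudoMetricSpace X]

theorem card_filter_exists_dist_le_le_card {r : ℝ} {L C : Finset X}
    [DecidablePred fun v : X => ∃ c ∈ C, dist v c ≤ r]
    (hL : (L : Set X).Pairwise fun u v => 2 * r < dist u v) :
    #{v ∈ L | ∃ c ∈ C, dist v c ≤ r} ≤ #C := by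
  refine card_le_card_of_forall_subsingleton (fun v c => dist v c ≤ r)
    (fun v hv => (mem_filter.1 hv).2) ?_
  rintro c - u ⟨hu, huc⟩ v ⟨hv, hvc⟩
  by_contra huv
  have hsep := hL (mem_filter.1 hu).1 (mem_filter.1 hv).1 huv
  linarith [dist_triangle_right u v c]

theorem exists_subset_card_le_recenter (r : ℝ) (L C : Finset X) :
    ∃ D ⊆ L, #D ≤ #C ∧
      ∀ v ∈ L, (∃ c ∈ C, dist v c ≤ r) → ∃ d ∈ D, dist v d ≤ 2 * r := by
  classical
  set C' := C.filter fun c => ∃ v ∈ L, dist v c ≤ r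
  have hmeets : ∀ c ∈ C', ∃ v ∈ L, dist v c ≤ r := fun c hc => (mem_filter.1 hc).2
  choose! f hfL hfc using hmeets
  refine ⟨C'.image f, ?_, card_image_le.trans (card_filter_le _ _), ?_⟩
  · intro d hd
    obtain ⟨c, hc, rfl⟩ := mem_image.1 hd
    exact hfL c hc
  · rintro v hv ⟨c, hc, hvc⟩
    have hc' : c ∈ C' := mem_filter.2 ⟨hc, v, hv, hvc⟩
    refine ⟨f c, mem_image_of_mem f hc', ?_⟩
    linarith [dist_triangle_right v (f c) c, hfc c hc']

end Metric

theorem two_radii_recentering_general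
    {X : Type*} [MetricSpace X]
    (r₁ r₂ : ℝ)
    (k₁ k₂ : ℕ) (L : Finset X)
    (hL : ∀ u ∈ L, ∀ v ∈ L, u ≠ v → 2 * r₂ < dist u v)
    (C₁ C₂ : Finset X) (hC₁ : C₁.card ≤ k₁) (hC₂ : C₂.card ≤ k₂) :
    {v ∈ (L : Set X) | (∃ c ∈ C₂, dist v c ≤ r₂) ∧
      ∀ c ∈ C₁, r₁ < dist v c}.ncard ≤ k₂ ∧
    ∃ D : Finset X, D ⊆ L ∧ D.card ≤ k₁ ∧
      ∀ v ∈ L, (∃ c ∈ C₁, dist v c ≤ r₁) → ∃ d ∈ D, dist v d ≤ 2 * r₁ := by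
  classical
  constructor
  · have hsub : {v ∈ (L : Set X) | (∃ c ∈ C₂, dist v c ≤ r₂) ∧ ∀ c ∈ C₁, r₁ < dist v c} ⊆
        ↑(L.filter fun v => ∃ c ∈ C₂, dist v c ≤ r₂) :=
      fun v hv => mem_filter.2 ⟨hv.1, hv.2.1⟩
    calc _ ≤ #(L.filter fun v => ∃ c ∈ C₂, dist v c ≤ r₂) := by
          simpa only [Set.ncard_coe_finset] using Set.ncard_le_ncard hsub (finite_toSet _)
      _ ≤ #C₂ := Metric.card_filter_exists_dist_le_le_card fun u hu v hv => hL u hu v hv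
      _ ≤ k₂ := hC₂
  · obtain ⟨D, hDL, hD, hcover⟩ := Metric.exists_subset_card_le_recenter r₁ L C₁
    exact ⟨D, hDL, hD.trans hC₁, hcover⟩

theorem two_radii_recentering
    {X : Type*} [MetricSpace X] [Fintype X]
    (r₁ r₂ : ℝ) (hr₂ : 0 ≤ r₂) (hr : r₂ ≤ r₁)
    (k₁ k₂ : ℕ) (L : Finset X)
    (hL : ∀ u ∈ L, ∀ v ∈ L, u ≠ v → 2 * r₂ < dist u v)
    (C₁ C₂ : Finset X) (hC₁ : C₁.card ≤ k₁) (hC₂ : C₂.card ≤ k₂)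
    (hcover : ∀ v ∈ L, (∃ c ∈ C₁, dist v c ≤ r₁) ∨ (∃ c ∈ C₂, dist v c ≤ r₂)) :
    {v ∈ (L : Set X) | (∃ c ∈ C₂, dist v c ≤ r₂) ∧
      ∀ c ∈ C₁, r₁ < dist v c}.ncard ≤ k₂ ∧
    ∃ D : Finset X, D ⊆ L ∧ D.card ≤ k₁ ∧
      ∀ v ∈ L, (∃ c ∈ C₁, dist v c ≤ r₁) → ∃ d ∈ D, dist v d ≤ 2 * r₁ :=
  two_radii_recentering_general r₁ r₂ k₁ k₂ L hL C₁ C₂ hC₁ hC₂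
end
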